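/- Let A be a Banach algebra, X a Banach A-bimodule, and suppose for each x'' in X** the map F ↦ x''·F from A** to X** is weak*-to-weak continuous. If D : A → X* is a derivation, then D''(A**)·X** ⊆ A*: for every F in A** and x'' in X**, the functional G ↦ <D''(F), x''·G> on A** is represented by an element of A*. -/

import Mathlib

/-! A bounded functional on `X**`, such as `D''(F)`, is weakly continuous, so composing it with the
weak*-to-weak continuous map `G ↦ x''·G` gives a weak*-continuous functional on `A**`; by the weak
representation theorem every such functional is evaluation at an element of `A*`. -/

open NormedSpace ContinuousLinearMap Filter

noncomputable section

/-- `NormedSpace.Dual` (removed from Mathlib, replaced by `StrongDual`), restored as a type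
synonym of `E →L[𝕜] 𝕜` carrying the operator-norm structure. -/
def NormedSpace.Dual (𝕜 : Type*) (E : Type*) [NontriviallyNormedField 𝕜]
    [NormedAddCommGroup E] [NormedSpace 𝕜 E] : Type _ := E →L[𝕜] 𝕜

instance NormedSpace.Dual.instNormedAddCommGroup (𝕜 : Type*) (E : Type*)
    [NontriviallyNormedField 𝕜] [NormedAddCommGroup E] [NormedSpace 𝕜 E] :
    NormedAddCommGroup (NormedSpace.Dual 𝕜 E) := ContinuousLinearMap.toNormedAddCommGroup

instance NormedSpace.Dual.instNormedSpace (𝕜 : Type*) (E : Type*)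
    [NontriviallyNormedField 𝕜] [NormedAddCommGroup E] [NormedSpace 𝕜 E] :
    NormedSpace 𝕜 (NormedSpace.Dual 𝕜 E) := ContinuousLinearMap.toNormedSpace

instance NormedSpace.Dual.instFunLike (𝕜 : Type*) (E : Type*)
    [NontriviallyNormedField 𝕜] [NormedAddCommGroup E] [NormedSpace 𝕜 E] :
    FunLike (NormedSpace.Dual 𝕜 E) E 𝕜 := ContinuousLinearMap.funLike

instance NormedSpace.Dual.instContinuousLinearMapClass (𝕜 : Type*) (E : Type*)
    [NontriviallyNormedField 𝕜] [NormedAddCommGroup E] [NormedSpace 𝕜 E] :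
    ContinuousLinearMapClass (NormedSpace.Dual 𝕜 E) 𝕜 E 𝕜 :=
  ContinuousLinearMap.continuousSemilinearMapClass

/-- The adjoint (dual map) of a continuous linear map: `dMap T φ = φ ∘ T`. -/
def dMap {E F : Type*} [NormedAddCommGroup E] [NormedSpace ℝ E]
    [NormedAddCommGroup F] [NormedSpace ℝ F] (T : E →L[ℝ] F) :
    Dual ℝ F →L[ℝ] Dual ℝ E :=
  (ContinuousLinearMap.compL ℝ E F ℝ).flip T

/-- The double adjoint of a continuous linear map. -/
def ddMap {E F : Type*} [NormedAddCommGroup E] [NormedSpace ℝ E]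
    [NormedAddCommGroup F] [NormedSpace ℝ F] (T : E →L[ℝ] F) :
    Dual ℝ (Dual ℝ E) →L[ℝ] Dual ℝ (Dual ℝ F) :=
  dMap (dMap T)

/-- The (first, left) Arens extension of a bounded bilinear map `m : E × F → G` to the
biduals, via the classical three steps:
`⟨g'·e, f⟩ = ⟨g', m e f⟩`, `⟨Ψ·g', e⟩ = ⟨Ψ, g'·e⟩`, `⟨arensExt m Φ Ψ, g'⟩ = ⟨Φ, Ψ·g'⟩`. -/
def arensExt {E F G : Type*} [NormedAddCommGroup E] [NormedSpace ℝ E]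
    [NormedAddCommGroup F] [NormedSpace ℝ F] [NormedAddCommGroup G] [NormedSpace ℝ G]
    (m : E →L[ℝ] F →L[ℝ] G) :
    Dual ℝ (Dual ℝ E) →L[ℝ] Dual ℝ (Dual ℝ F) →L[ℝ] Dual ℝ (Dual ℝ G) :=
  let s1 : E →L[ℝ] (Dual ℝ G →L[ℝ] Dual ℝ F) :=
    ((ContinuousLinearMap.compL ℝ F G ℝ).flip).comp m
  let s2 : Dual ℝ G →L[ℝ] (Dual ℝ (Dual ℝ F) →L[ℝ] Dual ℝ E) :=
    ((ContinuousLinearMap.compL ℝ E (Dual ℝ F) ℝ).flip).comp s1.flip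
  (((ContinuousLinearMap.compL ℝ (Dual ℝ G) (Dual ℝ E) ℝ).flip).comp s2.flip).flip

/-- The first Arens product on the bidual of a (possibly non-unital) Banach algebra:
`⟨F G, a'⟩ = ⟨F, G·a'⟩` where `⟨G·a', a⟩ = ⟨G, a'·a⟩` and `⟨a'·a, b⟩ = ⟨a', a*b⟩`. -/
def arens1 (A : Type*) [NonUnitalNormedRing A] [NormedSpace ℝ A]
    [IsScalarTower ℝ A A] [SMulCommClass ℝ A A] :
    Dual ℝ (Dual ℝ A) →L[ℝ] Dual ℝ (Dual ℝ A) →L[ℝ] Dual ℝ (Dual ℝ A) :=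
  arensExt (ContinuousLinearMap.mul ℝ A)

/-- The second Arens product on the bidual of a (possibly non-unital) Banach algebra:
`⟨F ∘ G, a'⟩ = ⟨G, a'∘F⟩` where `⟨a'∘F, a⟩ = ⟨F, a∘a'⟩` and `⟨a∘a', b⟩ = ⟨a', b*a⟩`. -/
def arens2 (A : Type*) [NonUnitalNormedRing A] [NormedSpace ℝ A]
    [IsScalarTower ℝ A A] [SMulCommClass ℝ A A] :
    Dual ℝ (Dual ℝ A) →L[ℝ] Dual ℝ (Dual ℝ A) →L[ℝ] Dual ℝ (Dual ℝ A) :=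
  (arensExt ((ContinuousLinearMap.mul ℝ A).flip)).flip

/-- `f`, a map from a dual space to a normed space, is weak-star-to-weak continuous. -/
def WstarToWeakContinuous {E F : Type*} [NormedAddCommGroup E] [NormedSpace ℝ E]
    [NormedAddCommGroup F] [NormedSpace ℝ F]
    (f : Dual ℝ E → F) : Prop :=
  Continuous fun x : WeakDual ℝ E => toWeakSpace ℝ F (f x)
variable {A : Type*} [NonUnitalNormedRing A] [NormedSpace ℝ A]
  [IsScalarTower ℝ A A] [SMulCommClass ℝ A A] [CompleteSpace A]
variable {X : Type*} [NormedAddCommGroup X] [NormedSpace ℝ X] [CompleteSpace X]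

theorem WstarToWeakContinuous.continuous_comp {E F : Type*} [NormedAddCommGroup E]
    [NormedSpace ℝ E] [NormedAddCommGroup F] [NormedSpace ℝ F] {f : Dual ℝ E → F}
    (hf : WstarToWeakContinuous f) (φ : Dual ℝ F) :
    Continuous fun x : WeakDual ℝ E => φ (f x) :=
  (WeakBilin.eval_continuous (topDualPairing ℝ F).flip φ).comp hf

theorem NormedSpace.Dual.exists_eq_apply_of_continuous_weakDual {𝕜 E : Type*}
    [NontriviallyNormedField 𝕜] [NormedAddCommGroup E] [NormedSpace 𝕜 E]
    (T : Dual 𝕜 (Dual 𝕜 E) →L[𝕜] 𝕜) (hT : Continuous fun G : WeakDual 𝕜 (Dual 𝕜 E) => T G) :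
    ∃ a' : Dual 𝕜 E, ∀ G : Dual 𝕜 (Dual 𝕜 E), T G = G a' := by
  obtain ⟨a', ha'⟩ := LinearMap.dualEmbedding_surjective (topDualPairing 𝕜 (Dual 𝕜 E))
    ⟨T.toLinearMap, hT⟩
  exact ⟨a', fun G => (congrArg (· G) ha').symm⟩

theorem bidual_derivation_range_cond_general
    -- `l` is the left action, `r a x = x · a` is the right action of the bimodule `X`
    (r : A →L[ℝ] X →L[ℝ] X)
    (hw : ∀ x'' : Dual ℝ (Dual ℝ X),
      WstarToWeakContinuous fun F : Dual ℝ (Dual ℝ A) => arensExt r.flip x'' F)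
    (D : A →L[ℝ] Dual ℝ X)
    (F : Dual ℝ (Dual ℝ A)) (x'' : Dual ℝ (Dual ℝ X)) :
    ∃ a' : Dual ℝ A, ∀ G : Dual ℝ (Dual ℝ A),
      ddMap D F (arensExt r.flip x'' G) = G a' :=
  Dual.exists_eq_apply_of_continuous_weakDual ((ddMap D F).comp (arensExt r.flip x''))
    ((hw x'').continuous_comp (ddMap D F))

/-- If for each `x'' ∈ X**` the map `F ↦ x''·F` is weak-star-to-weak continuous and
`D : A → X*` is a derivation, then `D''(A**) · X** ⊆ A*`: each functional
`G ↦ ⟨D''(F), x''·G⟩` on `A**` is represented by an element of `A*`. -/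
theorem bidual_derivation_range_cond
    -- `l` is the left action, `r a x = x · a` is the right action of the bimodule `X`
    (l r : A →L[ℝ] X →L[ℝ] X)
    (hl : ∀ a b : A, l (a * b) = (l a).comp (l b))
    (hr : ∀ a b : A, r (a * b) = (r b).comp (r a))
    (hc : ∀ a b : A, (l a).comp (r b) = (r b).comp (l a))
    (hw : ∀ x'' : Dual ℝ (Dual ℝ X),
      WstarToWeakContinuous fun F : Dual ℝ (Dual ℝ A) => arensExt r.flip x'' F)
    (D : A →L[ℝ] Dual ℝ X)
    (hD : ∀ a b : A, D (a * b) = dMap (r a) (D b) + dMap (l b) (D a))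
    (F : Dual ℝ (Dual ℝ A)) (x'' : Dual ℝ (Dual ℝ X)) :
    ∃ a' : Dual ℝ A, ∀ G : Dual ℝ (Dual ℝ A),
      ddMap D F (arensExt r.flip x'' G) = G a' :=
  bidual_derivation_range_cond_general r hw D F x''
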